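/- In a σ-generalized (right) Bol loop, for every y the triple (R_{y^{-1}}, L_y R_{σ(y)}, R_{σ(y)}) is an autotopism. -/

import Mathlib

/-- A loop: a magma with two-sided identity whose translations are bijections. -/
structure IsLoop (Q : Type*) [Mul Q] [One Q] : Prop where
  one_mul : ∀ x : Q, 1 * x = x
  mul_one : ∀ x : Q, x * 1 = x
  lbij : ∀ x : Q, Function.Bijective (fun y : Q => x * y)
  rbij : ∀ x : Q, Function.Bijective (fun y : Q => y * x)

/-- Left translation `L x : y ↦ x * y` as a permutation. -/
noncomputable def Lt {Q : Type*} [Mul Q] [One Q] (h : IsLoop Q) (x : Q) : Equiv.Perm Q :=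
  Equiv.ofBijective _ (h.lbij x)

/-- Right translation `R x : y ↦ y * x` as a permutation. -/
noncomputable def Rt {Q : Type*} [Mul Q] [One Q] (h : IsLoop Q) (x : Q) : Equiv.Perm Q :=
  Equiv.ofBijective _ (h.rbij x)

/-- The right inverse `x^ρ`, the unique solution of `x * x^ρ = 1`. -/
noncomputable def rinv {Q : Type*} [Mul Q] [One Q] (h : IsLoop Q) (x : Q) : Q :=
  (Lt h x).symm 1

/-- The left inverse `x^λ`, the unique solution of `x^λ * x = 1`. -/
noncomputable def linv {Q : Type*} [Mul Q] [One Q] (h : IsLoop Q) (x : Q) : Q :=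
  (Rt h x).symm 1

/-- σ-generalized (right) Bol identity. -/
def RightBol {Q : Type*} [Mul Q] (σ : Q → Q) : Prop :=
  ∀ x y z : Q, ((x * y) * z) * σ y = x * ((y * z) * σ y)

/-- σ-generalized left Bol identity. -/
def LeftBol {Q : Type*} [Mul Q] (σ : Q → Q) : Prop :=
  ∀ x y z : Q, σ y * (z * (y * x)) = (σ y * (z * y)) * x

/-- `(A,B,C)` is an autotopism: `A x * B y = C (x * y)`. -/
def Autotopism {Q : Type*} [Mul Q] (A B C : Equiv.Perm Q) : Prop :=
  ∀ x y : Q, A x * B y = C (x * y)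

/-!
Taking `z = y^ρ` in the Bol identity and cancelling `σ y` gives the right inverse property
`(x * y) * y^ρ = x`; applied to `y^ρ` it yields `y^ρρ = y`, hence also `(x * y^ρ) * y = x`.
The Bol identity with `x * y^ρ` in place of `x` is then exactly the autotopism identity.
-/

namespace IsLoop

variable {Q : Type*} [Mul Q] [One Q] (h : IsLoop Q)

theorem mul_rinv (y : Q) : y * rinv h y = 1 :=
  (Lt h y).apply_symm_apply 1

variable {σ : Q → Q} (hB : RightBol σ)
include hB

theorem mul_mul_rinv_of_rightBol (x y : Q) : x * y * rinv h y = x := by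
  have hb := hB x y (rinv h y)
  rw [h.mul_rinv y, h.one_mul] at hb
  exact (h.rbij (σ y)).1 hb

theorem rinv_rinv_of_rightBol (y : Q) : rinv h (rinv h y) = y := by
  simpa only [h.mul_rinv y, h.one_mul] using h.mul_mul_rinv_of_rightBol hB y (rinv h y)

theorem mul_rinv_mul_of_rightBol (x y : Q) : x * rinv h y * y = x := by
  simpa only [h.rinv_rinv_of_rightBol hB y] using h.mul_mul_rinv_of_rightBol hB x (rinv h y)

end IsLoop

/-- In a σ-generalized right Bol loop, `(R_{y⁻¹}, L_y R_{σ(y)}, R_{σ(y)})`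
is an autotopism for every `y`. -/
theorem stmt5 {Q : Type*} [Mul Q] [One Q] (h : IsLoop Q) (σ : Q → Q)
    (hB : RightBol σ) :
    ∀ y : Q, Autotopism (Rt h (rinv h y)) ((Lt h y).trans (Rt h (σ y))) (Rt h (σ y)) := by
  intro y x z
  show x * rinv h y * (y * z * σ y) = x * z * σ y
  simpa only [h.mul_rinv_mul_of_rightBol hB x y] using (hB (x * rinv h y) y z).symm
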